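/- Let (A, ∧, ∼, ∽, 1) be a pseudo equality algebra. Then for all x, y ∈ A: (1) y ∼ (((x∧y) ∼ x) ∽ y) = (x∧y) ∼ x; (2) (y ∼ (x ∽ (x∧y))) ∽ y = x ∽ (x∧y). -/

import Mathlib

/-! Both identities follow by antisymmetry. Write `a = (x∧y) ∼ x`. Axiom (A6) with `1` as
its second argument gives `a ≤ y ∼ (a ∽ y)` and `x ≤ a ∽ (x∧y)`; (A5) likewise gives `y ≤ a`, so by (A4)
`x ≤ a ∽ y`, and then (A5), meeting both sides of `y ∼ (a ∽ y)` with `x`, gives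
`y ∼ (a ∽ y) ≤ (x∧y) ∼ x`. The second identity is the mirror image. -/

/-- A pseudo equality algebra (JK-algebra): a meet-semilattice with top element `⊤`
(playing the role of `1`) equipped with two equality operations `sim` (`∼`) and
`bsim` (`∽`) satisfying axioms (A2)–(A7). -/
class PseudoEqualityAlgebra (A : Type*) extends SemilatticeInf A, OrderTop A where
  sim : A → A → A
  bsim : A → A → A
  sim_self : ∀ x : A, sim x x = ⊤
  bsim_self : ∀ x : A, bsim x x = ⊤
  sim_top : ∀ x : A, sim x ⊤ = x
  top_bsim : ∀ x : A, bsim ⊤ x = x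
  A4a : ∀ x y z : A, x ≤ y → y ≤ z → sim x z ≤ sim y z
  A4b : ∀ x y z : A, x ≤ y → y ≤ z → sim x z ≤ sim x y
  A4c : ∀ x y z : A, x ≤ y → y ≤ z → bsim z x ≤ bsim z y
  A4d : ∀ x y z : A, x ≤ y → y ≤ z → bsim z x ≤ bsim y x
  A5a : ∀ x y z : A, sim x y ≤ sim (x ⊓ z) (y ⊓ z)
  A5b : ∀ x y z : A, bsim x y ≤ bsim (x ⊓ z) (y ⊓ z)
  A6a : ∀ x y z : A, sim x y ≤ bsim (sim z x) (sim z y)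
  A6b : ∀ x y z : A, bsim x y ≤ sim (bsim x z) (bsim y z)
  A7a : ∀ x y z : A, sim x y ≤ sim (sim x z) (sim y z)
  A7b : ∀ x y z : A, bsim x y ≤ bsim (bsim z x) (bsim z y)

open PseudoEqualityAlgebra

namespace PseudoEqualityAlgebra

variable {A : Type*} [PseudoEqualityAlgebra A]

theorem le_bsim_sim (x z : A) : x ≤ bsim (sim z x) z := by
  simpa only [sim_top] using A6a x ⊤ z

theorem le_sim_bsim (x z : A) : x ≤ sim z (bsim x z) := by
  simpa only [top_bsim] using A6b ⊤ x z

theorem le_sim_inf_left (x y : A) : y ≤ sim (x ⊓ y) x := by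
  simpa only [sim_top, top_inf_eq, inf_comm y x] using A5a y ⊤ x

theorem le_bsim_inf_left (x y : A) : y ≤ bsim x (x ⊓ y) := by
  simpa only [top_bsim, top_inf_eq, inf_comm y x] using A5b ⊤ y x

theorem sim_le_sim_inf_left {x y c : A} (hxc : x ≤ c) : sim y c ≤ sim (x ⊓ y) x := by
  simpa only [inf_eq_right.2 hxc, inf_comm y x] using A5a y c x

theorem bsim_le_bsim_inf_left {x y c : A} (hxc : x ≤ c) : bsim c y ≤ bsim x (x ⊓ y) := by
  simpa only [inf_eq_right.2 hxc, inf_comm y x] using A5b c y x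

theorem le_bsim_sim_inf_left (x y : A) : x ≤ bsim (sim (x ⊓ y) x) y :=
  (le_bsim_sim x (x ⊓ y)).trans (A4c _ _ _ inf_le_right (le_sim_inf_left x y))

theorem le_sim_bsim_inf_left (x y : A) : x ≤ sim y (bsim x (x ⊓ y)) :=
  (le_sim_bsim x (x ⊓ y)).trans (A4a _ _ _ inf_le_right (le_bsim_inf_left x y))

end PseudoEqualityAlgebra

/-- Proposition 2.5: in any pseudo equality algebra,
(1) `y ∼ (((x∧y) ∼ x) ∽ y) = (x∧y) ∼ x`;
(2) `(y ∼ (x ∽ (x∧y))) ∽ y = x ∽ (x∧y)`. -/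
theorem stmt2 {A : Type*} [PseudoEqualityAlgebra A] (x y : A) :
    sim y (bsim (sim (x ⊓ y) x) y) = sim (x ⊓ y) x ∧
    bsim (sim y (bsim x (x ⊓ y))) y = bsim x (x ⊓ y) :=
  ⟨le_antisymm (sim_le_sim_inf_left (le_bsim_sim_inf_left x y)) (le_sim_bsim _ y),
    le_antisymm (bsim_le_bsim_inf_left (le_sim_bsim_inf_left x y)) (le_bsim_sim _ y)⟩
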